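/- Define p_{α,k}(s, r) = s^{-(d+2-α)/2} e^{-r²/(k s)} for s > 0 and p_{α,k}(s,r) = 0 for s ≤ 0. For any α, β, k > 0 there is a constant c(α,β,k,d) > 0 such that for all t ∈ ℝ, r ≥ 0: ∫_ℝ ∫_{ℝ^d} p_{α,k}(s, |y|) p_{β,k}(t - s, |x - y|) dy ds = c(α,β,k,d) p_{α+β,k}(t, |x|) for all x ∈ ℝ^d (Chapman–Kolmogorov-type semigroup identity for the scaled heat kernels). -/

import Mathlib

/-! For `0 < s < t` the space integral is the convolution of two centred Gaussians of variances
`∝ ks` and `∝ k(t - s)`, hence a Gaussian of variance `∝ kt`: completing the square gives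
`(π k s (t - s) / t)^{d/2} e^{-|x|²/(kt)}`. The factors `s^{d/2}`, `(t - s)^{d/2}` turn the
powers of `s` and `t - s` into `s^{α/2-1} (t - s)^{β/2-1}`, whose time integral over `(0, t)` is
`t^{(α+β)/2-1} B(α/2, β/2)`. So `c = (π k)^{d/2} B(α/2, β/2)`. -/

open MeasureTheory Set Real Module

theorem integral_rpow_mul_sub_rpow {a b t : ℝ} (ha : 0 < a) (hb : 0 < b) (ht : 0 < t) :
    ∫ s in 0..t, s ^ (a - 1) * (t - s) ^ (b - 1) =
      t ^ (a + b - 1) * ProbabilityTheory.beta a b := by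
  have hofReal : ∫ s in 0..t, (s : ℂ) ^ ((a : ℂ) - 1) * ((t : ℂ) - s) ^ ((b : ℂ) - 1) =
      ↑(∫ s in 0..t, s ^ (a - 1) * (t - s) ^ (b - 1)) := by
    rw [← intervalIntegral.integral_ofReal]
    refine intervalIntegral.integral_congr fun s hs ↦ ?_
    rw [uIcc_of_le ht.le] at hs
    rw [Complex.ofReal_mul, Complex.ofReal_cpow hs.1, Complex.ofReal_cpow (sub_nonneg.2 hs.2)]
    push_cast
    rfl
  have hpow : (t : ℂ) ^ ((a : ℂ) + b - 1) = ↑(t ^ (a + b - 1)) := by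
    rw [Complex.ofReal_cpow ht.le]
    push_cast
    rfl
  have hcomplex := congrArg Complex.re (Complex.betaIntegral_scaled a b ht)
  rwa [hofReal, Complex.ofReal_re, hpow, Complex.re_ofReal_mul,
    ← ProbabilityTheory.beta_eq_betaIntegralReal a b ha hb] at hcomplex

/-- The kernel `p_{a,k}(s, r)` in ambient dimension `n`. -/
noncomputable def scaledHeatKernel (n : ℕ) (k a s r : ℝ) : ℝ :=
  if 0 < s then s ^ (-(((n : ℝ) + 2 - a) / 2)) * rexp (-(r ^ 2) / (k * s)) else 0

namespace scaledHeatKernel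

variable {n : ℕ} {k a b s t r r' : ℝ}

theorem of_nonpos (hs : s ≤ 0) : scaledHeatKernel n k a s r = 0 :=
  if_neg hs.not_gt

theorem of_pos (hs : 0 < s) :
    scaledHeatKernel n k a s r = s ^ (-(((n : ℝ) + 2 - a) / 2)) * rexp (-(r ^ 2) / (k * s)) :=
  if_pos hs

theorem mul_eq_zero_of_notMem_Ioo (hs : s ∉ Ioo 0 t) :
    scaledHeatKernel n k a s r * scaledHeatKernel n k b (t - s) r' = 0 := by
  rcases le_or_gt s 0 with hs0 | hs0
  · rw [of_nonpos hs0, zero_mul]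
  · rw [of_nonpos (sub_nonpos.2 (not_lt.1 fun hst ↦ hs ⟨hs0, hst⟩)), mul_zero]

end scaledHeatKernel

section Convolution

variable {V : Type*} [NormedAddCommGroup V] [InnerProductSpace ℝ V] [FiniteDimensional ℝ V]
  [MeasurableSpace V] [BorelSpace V] {k a b s t : ℝ}

local notation "p" => scaledHeatKernel (finrank ℝ V) k

theorem integral_exp_neg_mul_sq_norm_mul_exp_neg_mul_sq_norm_sub (ha : 0 < a) (hb : 0 < b)
    (x : V) :
    ∫ y : V, rexp (-a * ‖y‖ ^ 2) * rexp (-b * ‖x - y‖ ^ 2) =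
      (π / (a + b)) ^ (finrank ℝ V / 2 : ℝ) * rexp (-(a * b / (a + b)) * ‖x‖ ^ 2) := by
  have hab : 0 < a + b := add_pos ha hb
  have complete_square : ∀ y : V,
      -a * ‖y‖ ^ 2 + -b * ‖x - y‖ ^ 2 =
        -(a * b / (a + b)) * ‖x‖ ^ 2 + -(a + b) * ‖y - (b / (a + b)) • x‖ ^ 2 := by
    intro y
    rw [norm_sub_sq_real x y, norm_sub_sq_real, real_inner_smul_right, real_inner_comm,
      norm_smul, mul_pow, Real.norm_eq_abs, sq_abs]
    field_simp
    ring
  simp_rw [← Real.exp_add, complete_square, Real.exp_add]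
  rw [integral_const_mul, integral_sub_right_eq_self (fun y : V ↦ rexp (-(a + b) * ‖y‖ ^ 2)),
    GaussianFourier.integral_rexp_neg_mul_sq_norm hab, mul_comm]

theorem integral_scaledHeatKernel_mul_scaledHeatKernel (hk : 0 < k) (hs : 0 < s) (hst : s < t)
    (x : V) :
    ∫ y : V, p a s ‖y‖ * p b (t - s) ‖x - y‖ =
      (π * k / t) ^ (finrank ℝ V / 2 : ℝ) * rexp (-‖x‖ ^ 2 / (k * t)) *
        (s ^ (a / 2 - 1) * (t - s) ^ (b / 2 - 1)) := by
  have hts : 0 < t - s := sub_pos.2 hst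
  have ht : 0 < t := hs.trans hst
  have hgauss : ∀ y : V, p a s ‖y‖ * p b (t - s) ‖x - y‖ =
      s ^ (-(((finrank ℝ V : ℝ) + 2 - a) / 2)) * (t - s) ^ (-(((finrank ℝ V : ℝ) + 2 - b) / 2)) *
        (rexp (-(k * s)⁻¹ * ‖y‖ ^ 2) * rexp (-(k * (t - s))⁻¹ * ‖x - y‖ ^ 2)) := by
    intro y
    rw [scaledHeatKernel.of_pos hs, scaledHeatKernel.of_pos hts]
    ring_nf
  have hvar : π / ((k * s)⁻¹ + (k * (t - s))⁻¹) = π * k / t * (s * (t - s)) := by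
    field_simp
    ring
  have hrate : (k * s)⁻¹ * (k * (t - s))⁻¹ / ((k * s)⁻¹ + (k * (t - s))⁻¹) = (k * t)⁻¹ := by
    field_simp
    ring
  have hpow : ∀ {u : ℝ} (c : ℝ), 0 < u →
      u ^ (-(((finrank ℝ V : ℝ) + 2 - c) / 2)) * u ^ (finrank ℝ V / 2 : ℝ) = u ^ (c / 2 - 1) :=
    fun c hu ↦ by rw [← rpow_add hu]; ring_nf
  simp_rw [hgauss]
  rw [integral_const_mul, integral_exp_neg_mul_sq_norm_mul_exp_neg_mul_sq_norm_sub
      (by positivity) (by positivity), hvar, hrate, mul_rpow (by positivity) (by positivity),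
    mul_rpow hs.le hts.le, ← hpow a hs, ← hpow b hts]
  ring_nf

theorem integral_integral_scaledHeatKernel_mul_scaledHeatKernel (hk : 0 < k) (ha : 0 < a)
    (hb : 0 < b) (t : ℝ) (x : V) :
    ∫ s, ∫ y : V, p a s ‖y‖ * p b (t - s) ‖x - y‖ =
      (π * k) ^ (finrank ℝ V / 2 : ℝ) * ProbabilityTheory.beta (a / 2) (b / 2) *
        p (a + b) t ‖x‖ := by
  have hinner : (fun s ↦ ∫ y : V, p a s ‖y‖ * p b (t - s) ‖x - y‖) = (Ioo 0 t).indicator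
      fun s ↦ (π * k / t) ^ (finrank ℝ V / 2 : ℝ) * rexp (-‖x‖ ^ 2 / (k * t)) *
        (s ^ (a / 2 - 1) * (t - s) ^ (b / 2 - 1)) := by
    funext s
    by_cases hs : s ∈ Ioo 0 t
    · rw [indicator_of_mem hs, integral_scaledHeatKernel_mul_scaledHeatKernel hk hs.1 hs.2]
    · simp_rw [indicator_of_notMem hs, scaledHeatKernel.mul_eq_zero_of_notMem_Ioo hs,
        integral_zero]
  rw [hinner, integral_indicator measurableSet_Ioo, integral_const_mul]
  rcases le_or_gt t 0 with ht | ht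
  · rw [Ioo_eq_empty (not_lt.2 ht), Measure.restrict_empty, integral_zero_measure,
      scaledHeatKernel.of_nonpos ht, mul_zero, mul_zero]
  have htime : t ^ (-(((finrank ℝ V : ℝ) + 2 - (a + b)) / 2)) =
      t ^ (a / 2 + b / 2 - 1) / t ^ (finrank ℝ V / 2 : ℝ) := by
    rw [← rpow_sub ht]
    ring_nf
  rw [← integral_Ioc_eq_integral_Ioo, ← intervalIntegral.integral_of_le ht.le,
    integral_rpow_mul_sub_rpow (half_pos ha) (half_pos hb) ht, scaledHeatKernel.of_pos ht,
    htime, div_rpow (by positivity) ht.le]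
  ring

end Convolution

theorem stmt_11_general (d : ℕ) (α β k : ℝ) (hα : 0 < α) (hβ : 0 < β)
    (hk : 0 < k)
    (P : ℝ → ℝ → ℝ → ℝ)
    (hP : ∀ a s r, P a s r =
      if 0 < s then s ^ (-(((d : ℝ) + 2 - a) / 2)) * Real.exp (-(r ^ 2) / (k * s)) else 0) :
    ∃ c : ℝ, 0 < c ∧ ∀ (t : ℝ) (x : EuclideanSpace ℝ (Fin d)),
      (∫ s : ℝ, ∫ y : EuclideanSpace ℝ (Fin d), P α s ‖y‖ * P β (t - s) ‖x - y‖) =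
        c * P (α + β) t ‖x‖ := by
  obtain rfl : P = scaledHeatKernel (finrank ℝ (EuclideanSpace ℝ (Fin d))) k := by
    funext a s r
    rw [hP, scaledHeatKernel, finrank_euclideanSpace_fin]
  exact ⟨_, mul_pos (by positivity) (ProbabilityTheory.beta_pos (half_pos hα) (half_pos hβ)),
    integral_integral_scaledHeatKernel_mul_scaledHeatKernel hk hα hβ⟩

theorem stmt_11 (d : ℕ) (hd : 1 ≤ d) (α β k : ℝ) (hα : 0 < α) (hβ : 0 < β)
    (hk : 0 < k) (hαβ : α + β < d + 2)
    (P : ℝ → ℝ → ℝ → ℝ)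
    (hP : ∀ a s r, P a s r =
      if 0 < s then s ^ (-(((d : ℝ) + 2 - a) / 2)) * Real.exp (-(r ^ 2) / (k * s)) else 0) :
    ∃ c : ℝ, 0 < c ∧ ∀ (t : ℝ) (x : EuclideanSpace ℝ (Fin d)),
      (∫ s : ℝ, ∫ y : EuclideanSpace ℝ (Fin d), P α s ‖y‖ * P β (t - s) ‖x - y‖) =
        c * P (α + β) t ‖x‖ :=
  stmt_11_general d α β k hα hβ hk P hP
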